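/- Let α₂ ≤ 0, α₃ ≤ 0, and α₁ ≤ α₂²/4 be real numbers. Let x : ℤ → ℝ have all values positive, satisfy equation (E) at every v ∈ ℤ, and satisfy for every v ∈ ℤ (writing z_i = x(v+i)): z₃ = (−α₃z₁³ − α₂z₀z₁z₂ + √(D(x,v)))/(2z₀²) (under these hypotheses D(x,v) ≥ 0, so the real square root makes sense). Then x(v)²·x(v+3) = x(v−1)·x(v+2)² for all v ∈ ℤ. -/
import Mathlib


noncomputable section

/-- Equation (E) at `v` (real version). -/
def eqER (α₁ α₂ α₃ : ℝ) (x : ℤ → ℝ) (v : ℤ) : Prop :=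
  (x v)^2 * (x (v+3))^2 + α₁ * (x (v+1))^2 * (x (v+2))^2
    + α₂ * x v * x (v+1) * x (v+2) * x (v+3)
    + α₃ * (x v * (x (v+2))^3 + (x (v+1))^3 * x (v+3)) = 0

/-- The discriminant `D` at `v` (real version). -/
def D1R (α₁ α₂ α₃ : ℝ) (x : ℤ → ℝ) (v : ℤ) : ℝ :=
  α₃^2 * (x (v+1))^6 + 2 * α₂ * α₃ * x v * (x (v+1))^4 * x (v+2)
    + (α₂^2 - 4 * α₁) * (x v)^2 * (x (v+1))^2 * (x (v+2))^2
    - 4 * α₃ * (x v)^3 * (x (v+2))^3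

set_option maxHeartbeats 1000000 in
/-- Theorem pos_thm_1d_example. -/
theorem statement17 (α₁ α₂ α₃ : ℝ)
    (hα₂ : α₂ ≤ 0) (hα₃ : α₃ ≤ 0) (hα₁ : α₁ ≤ α₂^2 / 4)
    (x : ℤ → ℝ) (hpos : ∀ v, 0 < x v)
    (heq : ∀ v : ℤ, eqER α₁ α₂ α₃ x v)
    (hrec : ∀ v : ℤ,
      x (v+3) = (-α₃ * (x (v+1))^3 - α₂ * x v * x (v+1) * x (v+2)
          + Real.sqrt (D1R α₁ α₂ α₃ x v)) / (2 * (x v)^2)) :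
    ∀ v : ℤ, (x v)^2 * x (v+3) = x (v-1) * (x (v+2))^2 := by

  have hA : 0 ≤ α₂ * α₃ := by nlinarith [mul_nonneg (neg_nonneg.2 hα₂) (neg_nonneg.2 hα₃)]
  have hB : 0 ≤ α₂^2 - 4*α₁ := by nlinarith
  have hC : 0 ≤ -α₃ := neg_nonneg.mpr hα₃
  have hD : ∀ v : ℤ, 0 ≤ D1R α₁ α₂ α₃ x v := by
    intro v
    have h0 := hpos v; have h1 := hpos (v+1); have h2 := hpos (v+2)
    unfold D1R
    nlinarith [sq_nonneg α₃, pow_pos h1 6,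
      mul_pos (mul_pos h0 (pow_pos h1 4)) h2,
      mul_pos (mul_pos (pow_pos h0 2) (pow_pos h1 2)) (pow_pos h2 2),
      mul_pos (pow_pos h0 3) (pow_pos h2 3)]
  intro v
  have e1 : v - 1 + 1 = v := by ring
  have e2 : v - 1 + 2 = v + 1 := by ring
  have e3 : v - 1 + 3 = v + 2 := by ring
  set a := x (v-1) with ha
  set b := x v with hb
  set c := x (v+1) with hc
  set d := x (v+2) with hd
  set e := x (v+3) with he
  have hpa : 0 < a := hpos _
  have hpb : 0 < b := hpos _
  have hpc : 0 < c := hpos _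
  have hpd : 0 < d := hpos _
  set S := Real.sqrt (D1R α₁ α₂ α₃ x (v-1)) with hSdef
  have hSnn : 0 ≤ S := Real.sqrt_nonneg _
  have hS2 : S^2 = α₃^2*b^6 + 2*α₂*α₃*a*b^4*c + (α₂^2 - 4*α₁)*a^2*b^2*c^2
      - 4*α₃*a^3*c^3 := by
    rw [hSdef, Real.sq_sqrt (hD (v-1))]
    unfold D1R
    rw [e1, e2]
  have hS : d * (2 * a^2) = -α₃ * b^3 - α₂ * a * b * c + S := by
    have h := hrec (v-1)
    rw [e1, e2, e3, ← ha, ← hb, ← hc, ← hd, ← hSdef] at h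
    rw [h, div_mul_cancel₀]
    positivity
  set Q : ℝ := 2*a*d^2 + α₂*b*c*d + α₃*c^3 with hQdef
  have hE' := heq (v-1)
  unfold eqER at hE'
  rw [e1, e2, e3] at hE'
  have key : 2*a^3*Q = 2*α₃^2*b^6 + 3*(α₂*α₃)*(a*b^4*c)
      + (α₂^2 - 4*α₁)*(a^2*b^2*c^2) + (-2*α₃)*(a^3*c^3)
      + S*(-α₂*(a*b*c) - 2*α₃*b^3) := by
    rw [hQdef]
    linear_combination (d*(2*a^2) + (-α₃*b^3 - α₂*a*b*c + S) + α₂*a*b*c) * hS + hS2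
  have hQ0 : 0 ≤ Q := by
    have t1 : 0 ≤ 2*α₃^2*b^6 := by positivity
    have t2 : 0 ≤ 3*(α₂*α₃)*(a*b^4*c) := by
      have : 0 ≤ a*b^4*c := by positivity
      nlinarith
    have t3 : 0 ≤ (α₂^2 - 4*α₁)*(a^2*b^2*c^2) := by
      have : 0 ≤ a^2*b^2*c^2 := by positivity
      nlinarith
    have t4 : 0 ≤ (-2*α₃)*(a^3*c^3) := by
      have : 0 ≤ a^3*c^3 := by positivity
      nlinarith
    have t5 : 0 ≤ S*(-α₂*(a*b*c) - 2*α₃*b^3) := by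
      have h1 : 0 ≤ -α₂*(a*b*c) := by
        have : 0 ≤ a*b*c := by positivity
        nlinarith
      have h2 : 0 ≤ -2*α₃*b^3 := by
        have : 0 ≤ b^3 := by positivity
        nlinarith
      nlinarith
    have ha3 : 0 < 2*a^3 := by positivity
    nlinarith [key]
  have hQsq : D1R α₁ α₂ α₃ x v = Q^2 := by
    unfold D1R
    rw [← hb, ← hc, ← hd, hQdef]
    linear_combination (-4*d^2) * hE'
  have hsq : Real.sqrt (D1R α₁ α₂ α₃ x v) = Q := by
    rw [hQsq, Real.sqrt_sq hQ0]
  have h := hrec v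
  rw [← hb, ← hc, ← hd, ← he, hsq] at h
  have hb2 : (2 : ℝ) * b^2 ≠ 0 := by positivity
  rw [eq_div_iff hb2] at h
  rw [hQdef] at h
  linear_combination h / 2
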